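/- arXiv:2510.01628 — 2 statements merged into one kernel-verified Lean document; each statement's English description precedes it below -/
import Mathlib

section
/- Integration-by-parts identity for DeWitt momenta: for ψ ∈ C_0^∞(Ω) on a Riemannian domain Ω with orthonormal frame {X_a}, and P_a = −iℏ(X_a + ½f_a) with f_a = div X_a, one has Σ_a‖P_aψ‖²_{L²} = ℏ²∫_Ω ‖∇ψ‖² dμ − ℏ²∫_Ω V|ψ|² dμ, where V = ½Σ_a X_a f_a + ¼Σ_a f_a². -/
open MeasureTheory Function

section AuxLemmas

variable {n : ℕ}

local notation "𝕍" => EuclideanSpace ℝ (Fin n)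

/-- The integral of a directional derivative of a compactly supported `C¹` function
vanishes. -/
lemma aux_integral_fderiv_eq_zero {h : EuclideanSpace ℝ (Fin n) → ℝ}
    (hsm : ContDiff ℝ 1 h) (hc : HasCompactSupport h) (v : EuclideanSpace ℝ (Fin n)) :
    ∫ x, fderiv ℝ h x v = 0 := by
  have hcont : Continuous fun x => fderiv ℝ h x v :=
    (hsm.continuous_fderiv one_ne_zero).clm_apply continuous_const
  have hcs : HasCompactSupport fun x => fderiv ℝ h x v :=
    HasCompactSupport.fderiv_apply (𝕜 := ℝ) hc v
  have key := integral_mul_fderiv_eq_neg_fderiv_mul_of_integrable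
    (μ := (volume : Measure 𝕍)) (f := fun _ : 𝕍 => (1 : ℝ)) (g := h) (v := v)
    ?_ ?_ ?_ ?_ ?_
  · simpa [fderiv_const] using key
  · simp [fderiv_const]
  · simpa using hcont.integrable_of_hasCompactSupport hcs
  · simpa using hsm.continuous.integrable_of_hasCompactSupport hc
  · exact fun x _ => differentiableAt_const _
  · exact fun x _ => hsm.differentiable one_ne_zero x

/-- Decomposition of a vector of `EuclideanSpace` in the standard basis. -/
lemma aux_sum_single (y : EuclideanSpace ℝ (Fin n)) :
    ∑ b : Fin n, y b • EuclideanSpace.single b (1 : ℝ) = y := by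
  have h := (EuclideanSpace.basisFun (Fin n) ℝ).sum_repr y
  simpa [EuclideanSpace.basisFun_repr, EuclideanSpace.basisFun_apply] using h

/-- Divergence theorem for a compactly supported `C¹` function multiplied by a `C¹`
vector field on Euclidean space: `∫ (Xg + g div X) = 0`. -/
lemma aux_divergence {g : EuclideanSpace ℝ (Fin n) → ℝ}
    {Y : EuclideanSpace ℝ (Fin n) → EuclideanSpace ℝ (Fin n)}
    (hg : ContDiff ℝ 1 g) (hgc : HasCompactSupport g) (hY : ContDiff ℝ 1 Y) :
    ∫ x, (fderiv ℝ g x (Y x)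
        + g x * ∑ b : Fin n, (fderiv ℝ Y x (EuclideanSpace.single b 1)) b) = 0 := by
  have hYb : ∀ b : Fin n, ContDiff ℝ 1 fun y => Y y b := fun b => by
    simpa [Function.comp_def] using (EuclideanSpace.proj (𝕜 := ℝ) b).contDiff.comp hY
  have hgYb : ∀ b : Fin n, ContDiff ℝ 1 fun y => g y * Y y b := fun b =>
    hg.mul (hYb b)
  have hgYbc : ∀ b : Fin n, HasCompactSupport fun y => g y * Y y b := fun b =>
    hgc.mul_right
  -- pointwise identity for the divergence
  have point : ∀ x, ∑ b : Fin n,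
      fderiv ℝ (fun y => g y * Y y b) x (EuclideanSpace.single b 1)
      = fderiv ℝ g x (Y x)
        + g x * ∑ b : Fin n, (fderiv ℝ Y x (EuclideanSpace.single b 1)) b := by
    intro x
    have hgx : HasFDerivAt g (fderiv ℝ g x) x :=
      ((hg.differentiable one_ne_zero) x).hasFDerivAt
    have hYx : HasFDerivAt Y (fderiv ℝ Y x) x :=
      ((hY.differentiable one_ne_zero) x).hasFDerivAt
    have hYbx : ∀ b : Fin n, HasFDerivAt (fun y => Y y b)
        ((EuclideanSpace.proj b).comp (fderiv ℝ Y x)) x := fun b => by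
      simpa [Function.comp_def]
        using (EuclideanSpace.proj (𝕜 := ℝ) b).hasFDerivAt.comp x hYx
    have hprod : ∀ b : Fin n, fderiv ℝ (fun y => g y * Y y b) x
        = g x • ((EuclideanSpace.proj b).comp (fderiv ℝ Y x)) + (Y x b) • fderiv ℝ g x :=
      fun b => (hgx.mul (hYbx b)).fderiv
    calc ∑ b : Fin n, fderiv ℝ (fun y => g y * Y y b) x (EuclideanSpace.single b 1)
        = ∑ b : Fin n, (g x * (fderiv ℝ Y x (EuclideanSpace.single b 1)) b
            + Y x b * fderiv ℝ g x (EuclideanSpace.single b 1)) := by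
          refine Finset.sum_congr rfl fun b _ => ?_
          rw [hprod b]
          simp [smul_eq_mul]
      _ = g x * ∑ b : Fin n, (fderiv ℝ Y x (EuclideanSpace.single b 1)) b
            + ∑ b : Fin n, Y x b * fderiv ℝ g x (EuclideanSpace.single b 1) := by
          rw [Finset.sum_add_distrib, Finset.mul_sum]
      _ = g x * ∑ b : Fin n, (fderiv ℝ Y x (EuclideanSpace.single b 1)) b
            + fderiv ℝ g x (Y x) := by
          congr 1
          have : ∑ b : Fin n, Y x b * fderiv ℝ g x (EuclideanSpace.single b 1)
              = fderiv ℝ g x (∑ b : Fin n, Y x b • EuclideanSpace.single b (1 : ℝ)) := by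
            rw [map_sum]
            simp [smul_eq_mul]
          rw [this, aux_sum_single]
      _ = _ := by ring
  have intb : ∀ b : Fin n, Integrable
      (fun x => fderiv ℝ (fun y => g y * Y y b) x (EuclideanSpace.single b 1)) := by
    intro b
    exact (((hgYb b).continuous_fderiv one_ne_zero).clm_apply
      continuous_const).integrable_of_hasCompactSupport
      (HasCompactSupport.fderiv_apply (𝕜 := ℝ) (hgYbc b) _)
  calc ∫ x, (fderiv ℝ g x (Y x)
        + g x * ∑ b : Fin n, (fderiv ℝ Y x (EuclideanSpace.single b 1)) b)
      = ∫ x, ∑ b : Fin n,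
          fderiv ℝ (fun y => g y * Y y b) x (EuclideanSpace.single b 1) := by
        refine integral_congr_ae (Filter.Eventually.of_forall fun x => ?_)
        exact (point x).symm
    _ = ∑ b : Fin n, ∫ x,
          fderiv ℝ (fun y => g y * Y y b) x (EuclideanSpace.single b 1) :=
        integral_finset_sum _ fun b _ => intb b
    _ = 0 := by
        refine Finset.sum_eq_zero fun b _ => ?_
        exact aux_integral_fderiv_eq_zero (hgYb b) (hgYbc b) _

/-- Sum of `normSq` of the values of a real-linear map on an orthonormal family of
`n` vectors in `n`-dimensional Euclidean space equals the corresponding sum over the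
standard basis. -/
lemma aux_frame (v : Fin n → EuclideanSpace ℝ (Fin n)) (hv : Orthonormal ℝ v)
    (L : EuclideanSpace ℝ (Fin n) →L[ℝ] ℂ) :
    ∑ a : Fin n, Complex.normSq (L (v a))
      = ∑ b : Fin n, Complex.normSq (L (EuclideanSpace.single b 1)) := by
  set u : EuclideanSpace ℝ (Fin n) :=
    (InnerProductSpace.toDual ℝ (EuclideanSpace ℝ (Fin n))).symm (Complex.reCLM.comp L)
  set w : EuclideanSpace ℝ (Fin n) :=
    (InnerProductSpace.toDual ℝ (EuclideanSpace ℝ (Fin n))).symm (Complex.imCLM.comp L)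
  have hu : ∀ y, inner ℝ u y = (L y).re := fun y =>
    InnerProductSpace.toDual_symm_apply
  have hw : ∀ y, inner ℝ w y = (L y).im := fun y =>
    InnerProductSpace.toDual_symm_apply
  have hLy : ∀ y, Complex.normSq (L y)
      = inner ℝ u y * inner ℝ y u + inner ℝ w y * inner ℝ y w := by
    intro y
    rw [Complex.normSq_apply, ← hu y, ← hw y, real_inner_comm y u, real_inner_comm y w]
  have key : ∀ B : OrthonormalBasis (Fin n) ℝ (EuclideanSpace ℝ (Fin n)),
      ∑ a : Fin n, Complex.normSq (L (B a))
        = inner ℝ u u + inner ℝ w w := by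
    intro B
    simp only [hLy]
    rw [Finset.sum_add_distrib, B.sum_inner_mul_inner u u, B.sum_inner_mul_inner w w]
  -- extend the orthonormal family to an orthonormal basis (it already spans)
  have hv' : Orthonormal ℝ (Set.univ.restrict v) :=
    hv.comp _ Subtype.val_injective
  obtain ⟨B, hB⟩ := hv'.exists_orthonormalBasis_extension_of_card_eq
    (by simp [finrank_euclideanSpace_fin])
  have hBv : ∀ a, B a = v a := fun a => hB a (Set.mem_univ a)
  have h1 : ∑ a : Fin n, Complex.normSq (L (v a))
      = inner ℝ u u + inner ℝ w w := by
    rw [← key B]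
    exact Finset.sum_congr rfl fun a _ => by rw [hBv a]
  have h2 : ∑ b : Fin n, Complex.normSq (L (EuclideanSpace.single b 1))
      = inner ℝ u u + inner ℝ w w := by
    rw [← key (EuclideanSpace.basisFun (Fin n) ℝ)]
    exact Finset.sum_congr rfl fun b _ => by rw [EuclideanSpace.basisFun_apply]
  rw [h1, h2]

end AuxLemmas

/-- **Integration-by-parts identity for the DeWitt momenta**: for a smooth
compactly supported `ψ` on a domain `Ω` with a pointwise orthonormal frame
`{X_a}` and `P_a = −iℏ(X_a + ½ f_a)`, `f_a = div X_a`, one has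
`Σ_a ‖P_aψ‖²_{L²} = ℏ² ∫ ‖∇ψ‖² dμ − ℏ² ∫ V |ψ|² dμ` with
`V = ½ Σ_a X_a f_a + ¼ Σ_a f_a²`. -/
theorem dewitt_integration_by_parts
    (n : ℕ) (Ω : Set (EuclideanSpace ℝ (Fin n))) (hΩopen : IsOpen Ω)
    (ℏ : ℝ)
    (X : Fin n → EuclideanSpace ℝ (Fin n) → EuclideanSpace ℝ (Fin n))
    (hXsm : ∀ a, ContDiff ℝ 2 (X a))
    (hXON : ∀ x, Orthonormal ℝ (fun a : Fin n => X a x))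
    (f : Fin n → EuclideanSpace ℝ (Fin n) → ℝ)
    (hf : ∀ a x, f a x = ∑ b : Fin n,
        (fderiv ℝ (X a) x (EuclideanSpace.single b 1)) b)
    (ψ : EuclideanSpace ℝ (Fin n) → ℂ)
    (hψsm : ContDiff ℝ (⊤ : ℕ∞) ψ) (hψc : HasCompactSupport ψ)
    (hψsupp : tsupport ψ ⊆ Ω)
    (Pψ : Fin n → EuclideanSpace ℝ (Fin n) → ℂ)
    (hPψ : ∀ a x, Pψ a x = -Complex.I * (ℏ : ℂ) *
        (fderiv ℝ ψ x (X a x) + (1 / 2) * (f a x : ℂ) * ψ x))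
    (V : EuclideanSpace ℝ (Fin n) → ℝ)
    (hV : ∀ x, V x = (1 / 2) * ∑ a : Fin n, fderiv ℝ (f a) x (X a x)
        + (1 / 4) * ∑ a : Fin n, (f a x) ^ 2) :
    (∑ a : Fin n, ∫ x, ‖Pψ a x‖ ^ 2)
      = ℏ ^ 2 * (∫ x, ∑ b : Fin n,
          ‖fderiv ℝ ψ x (EuclideanSpace.single b 1)‖ ^ 2)
        - ℏ ^ 2 * ∫ x, V x * ‖ψ x‖ ^ 2 := by
  classical
  set nψ : EuclideanSpace ℝ (Fin n) → ℝ := fun x => Complex.normSq (ψ x) with hnψdef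
  -- basic regularity facts
  have hψ1 : ContDiff ℝ 1 ψ := hψsm.of_le (by simp)
  have hψd : Differentiable ℝ ψ := hψ1.differentiable one_ne_zero
  have hdψcont : Continuous (fderiv ℝ ψ) := hψ1.continuous_fderiv one_ne_zero
  have hfa : ∀ a, ContDiff ℝ 1 (f a) := by
    intro a
    have h1 : ContDiff ℝ 1 (fderiv ℝ (X a)) :=
      (hXsm a).fderiv_right (by norm_num)
    have h2 : ∀ b : Fin n, ContDiff ℝ 1 fun x =>
        (fderiv ℝ (X a) x (EuclideanSpace.single b 1)) b := fun b => by
      simpa [Function.comp_def] using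
        (EuclideanSpace.proj (𝕜 := ℝ) b).contDiff.comp (h1.clm_apply contDiff_const)
    have h3 : ContDiff ℝ 1 fun x => ∑ b : Fin n,
        (fderiv ℝ (X a) x (EuclideanSpace.single b 1)) b :=
      ContDiff.sum fun b _ => h2 b
    have heq : f a = fun x => ∑ b : Fin n,
        (fderiv ℝ (X a) x (EuclideanSpace.single b 1)) b := funext fun x => hf a x
    rw [heq]
    exact h3
  have hnψ : ContDiff ℝ 1 nψ := by
    have hre : ContDiff ℝ 1 fun x => (ψ x).re := Complex.reCLM.contDiff.comp hψ1
    have him : ContDiff ℝ 1 fun x => (ψ x).im := Complex.imCLM.contDiff.comp hψ1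
    have : ContDiff ℝ 1 fun x => (ψ x).re * (ψ x).re + (ψ x).im * (ψ x).im :=
      (hre.mul hre).add (him.mul him)
    have heq : nψ = fun x => (ψ x).re * (ψ x).re + (ψ x).im * (ψ x).im :=
      funext fun x => Complex.normSq_apply _
    rw [heq]
    exact this
  have hnψc : HasCompactSupport nψ := hψc.comp_left (by simp)
  -- vanishing of functions off the support of ψ
  have hψ0 : ∀ x ∉ tsupport ψ, ψ x = 0 := fun x hx => image_eq_zero_of_notMem_tsupport hx
  have hdψ0 : ∀ x ∉ tsupport ψ, fderiv ℝ ψ x = 0 := fun x hx =>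
    notMem_support.mp fun hs => hx (support_fderiv_subset (𝕜 := ℝ) hs)
  have hnψ0 : ∀ x ∉ tsupport ψ, nψ x = 0 := fun x hx => by
    simp [hnψdef, hψ0 x hx]
  -- helper for integrability
  have hint : ∀ {g : EuclideanSpace ℝ (Fin n) → ℝ}, Continuous g →
      (∀ x ∉ tsupport ψ, g x = 0) → Integrable g := by
    intro g hg hs
    refine hg.integrable_of_hasCompactSupport (hψc.mono' ?_)
    exact Function.support_subset_iff'.mpr hs
  -- continuity facts
  have hcdψX : ∀ a, Continuous fun x => fderiv ℝ ψ x (X a x) := fun a =>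
    hdψcont.clm_apply (hXsm a).continuous
  have hcnψ : Continuous nψ := hnψ.continuous
  have hcfa : ∀ a, Continuous (f a) := fun a => (hfa a).continuous
  have hcXf : ∀ a, Continuous fun x => fderiv ℝ (f a) x (X a x) := fun a =>
    ((hfa a).continuous_fderiv one_ne_zero).clm_apply (hXsm a).continuous
  -- integrability of all relevant integrands
  have int1 : ∀ a, Integrable fun x => Complex.normSq (fderiv ℝ ψ x (X a x)) := by
    intro a
    refine hint (Complex.continuous_normSq.comp (hcdψX a)) fun x hx => ?_
    simp [hdψ0 x hx]
  have int2 : ∀ a, Integrable fun x =>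
      f a x * ((starRingEnd ℂ) (ψ x) * fderiv ℝ ψ x (X a x)).re := by
    intro a
    refine hint ((hcfa a).mul (Complex.continuous_re.comp
      ((Complex.continuous_conj.comp hψ1.continuous).mul (hcdψX a)))) fun x hx => ?_
    simp [hψ0 x hx]
  have int3 : ∀ a, Integrable fun x => (f a x) ^ 2 * nψ x := by
    intro a
    refine hint (((hcfa a).pow 2).mul hcnψ) fun x hx => ?_
    simp [hnψ0 x hx]
  have int4 : ∀ a, Integrable fun x => fderiv ℝ (f a) x (X a x) * nψ x := by
    intro a
    refine hint ((hcXf a).mul hcnψ) fun x hx => ?_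
    simp [hnψ0 x hx]
  -- derivative of nψ
  have hdnψ : ∀ x v, fderiv ℝ nψ x v
      = 2 * ((starRingEnd ℂ) (ψ x) * fderiv ℝ ψ x v).re := by
    intro x v
    have hψx : HasFDerivAt ψ (fderiv ℝ ψ x) x := (hψd x).hasFDerivAt
    have hre : HasFDerivAt (fun y => (ψ y).re)
        (Complex.reCLM.comp (fderiv ℝ ψ x)) x :=
      Complex.reCLM.hasFDerivAt.comp x hψx
    have him : HasFDerivAt (fun y => (ψ y).im)
        (Complex.imCLM.comp (fderiv ℝ ψ x)) x :=
      Complex.imCLM.hasFDerivAt.comp x hψx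
    have heq : nψ = fun y => (ψ y).re * (ψ y).re + (ψ y).im * (ψ y).im :=
      funext fun y => Complex.normSq_apply _
    have hd : HasFDerivAt nψ
        ((ψ x).re • (Complex.reCLM.comp (fderiv ℝ ψ x))
          + (ψ x).re • (Complex.reCLM.comp (fderiv ℝ ψ x))
          + ((ψ x).im • (Complex.imCLM.comp (fderiv ℝ ψ x))
            + (ψ x).im • (Complex.imCLM.comp (fderiv ℝ ψ x)))) x := by
      rw [heq]
      exact (hre.mul hre).add (him.mul him)
    rw [hd.fderiv]
    simp [Complex.mul_re, Complex.conj_re, Complex.conj_im, smul_eq_mul]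
    ring
  -- pointwise expansion of |Pψ|²
  have hP : ∀ a x, ‖Pψ a x‖ ^ 2
      = ℏ ^ 2 * (Complex.normSq (fderiv ℝ ψ x (X a x))
        + f a x * ((starRingEnd ℂ) (ψ x) * fderiv ℝ ψ x (X a x)).re
        + (1 / 4) * (f a x) ^ 2 * nψ x) := by
    intro a x
    rw [hPψ a x, Complex.sq_norm]
    simp only [hnψdef, Complex.normSq_apply, Complex.mul_re, Complex.mul_im,
      Complex.add_re, Complex.add_im, Complex.neg_re, Complex.neg_im,
      Complex.I_re, Complex.I_im, Complex.ofReal_re, Complex.ofReal_im,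
      Complex.conj_re, Complex.conj_im, Complex.div_re, Complex.div_im,
      Complex.one_re, Complex.one_im, Complex.normSq_ofNat]
    norm_num
    ring
  -- Step A: split the integral of |Pψ a|²
  have stepA : ∀ a, (∫ x, ‖Pψ a x‖ ^ 2)
      = ℏ ^ 2 * ((∫ x, Complex.normSq (fderiv ℝ ψ x (X a x)))
        + (∫ x, f a x * ((starRingEnd ℂ) (ψ x) * fderiv ℝ ψ x (X a x)).re)
        + (1 / 4) * ∫ x, (f a x) ^ 2 * nψ x) := by
    intro a
    have : (∫ x, ‖Pψ a x‖ ^ 2)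
        = ∫ x, ℏ ^ 2 * (Complex.normSq (fderiv ℝ ψ x (X a x))
          + f a x * ((starRingEnd ℂ) (ψ x) * fderiv ℝ ψ x (X a x)).re
          + (1 / 4) * (f a x) ^ 2 * nψ x) :=
      integral_congr_ae (Filter.Eventually.of_forall fun x => hP a x)
    have int3' : Integrable (fun x => (1 / 4 : ℝ) * (f a x) ^ 2 * nψ x) volume := by
      simpa [mul_assoc] using (int3 a).const_mul (1 / 4 : ℝ)
    have i12 : Integrable (fun x => Complex.normSq (fderiv ℝ ψ x (X a x))
        + f a x * ((starRingEnd ℂ) (ψ x) * fderiv ℝ ψ x (X a x)).re) volume :=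
      (int1 a).add (int2 a)
    rw [this, integral_const_mul]
    congr 1
    rw [integral_add i12 int3', integral_add (int1 a) (int2 a)]
    congr 1
    rw [← integral_const_mul]
    exact integral_congr_ae (Filter.Eventually.of_forall fun x => by ring)
  -- Step B: divergence identity for g = f a * nψ, Y = X a
  have stepB : ∀ a, (∫ x, fderiv ℝ (f a) x (X a x) * nψ x)
      + 2 * (∫ x, f a x * ((starRingEnd ℂ) (ψ x) * fderiv ℝ ψ x (X a x)).re)
      + (∫ x, (f a x) ^ 2 * nψ x) = 0 := by
    intro a
    have hg : ContDiff ℝ 1 fun x => f a x * nψ x := (hfa a).mul hnψ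
    have hgc : HasCompactSupport fun x => f a x * nψ x := hnψc.mul_left
    have hdiv := aux_divergence hg hgc ((hXsm a).of_le (by norm_num))
    -- pointwise computation of the integrand in hdiv
    have hpoint : ∀ x, fderiv ℝ (fun y => f a y * nψ y) x (X a x)
        + (f a x * nψ x) * ∑ b : Fin n, (fderiv ℝ (X a) x (EuclideanSpace.single b 1)) b
        = fderiv ℝ (f a) x (X a x) * nψ x
          + 2 * (f a x * ((starRingEnd ℂ) (ψ x) * fderiv ℝ ψ x (X a x)).re)
          + (f a x) ^ 2 * nψ x := by
      intro x
      have hfx : HasFDerivAt (f a) (fderiv ℝ (f a) x) x :=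
        (((hfa a).differentiable one_ne_zero) x).hasFDerivAt
      have hnx : HasFDerivAt nψ (fderiv ℝ nψ x) x :=
        (((hnψ).differentiable one_ne_zero) x).hasFDerivAt
      have hprod : fderiv ℝ (fun y => f a y * nψ y) x
          = f a x • fderiv ℝ nψ x + nψ x • fderiv ℝ (f a) x :=
        (hfx.mul hnx).fderiv
      rw [hprod, ← hf a x]
      simp only [ContinuousLinearMap.add_apply, ContinuousLinearMap.coe_smul',
        Pi.smul_apply, smul_eq_mul]
      rw [hdnψ x (X a x)]
      ring
    have hdiv' : (∫ x, (fderiv ℝ (f a) x (X a x) * nψ x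
        + 2 * (f a x * ((starRingEnd ℂ) (ψ x) * fderiv ℝ ψ x (X a x)).re)
        + (f a x) ^ 2 * nψ x)) = 0 := by
      rw [← hdiv]
      exact integral_congr_ae (Filter.Eventually.of_forall fun x => (hpoint x).symm)
    rw [← hdiv']
    have i42 : Integrable (fun x => fderiv ℝ (f a) x (X a x) * nψ x
        + 2 * (f a x * ((starRingEnd ℂ) (ψ x) * fderiv ℝ ψ x (X a x)).re)) volume :=
      (int4 a).add ((int2 a).const_mul 2)
    rw [integral_add i42 (int3 a), integral_add (int4 a) ((int2 a).const_mul 2),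
      integral_const_mul]
  -- Step C: combine
  have stepC : ∀ a, (∫ x, ‖Pψ a x‖ ^ 2)
      = ℏ ^ 2 * ((∫ x, Complex.normSq (fderiv ℝ ψ x (X a x)))
        - ((1 / 2) * (∫ x, fderiv ℝ (f a) x (X a x) * nψ x)
          + (1 / 4) * ∫ x, (f a x) ^ 2 * nψ x)) := by
    intro a
    rw [stepA a]
    have hb := stepB a
    have : (∫ x, f a x * ((starRingEnd ℂ) (ψ x) * fderiv ℝ ψ x (X a x)).re)
        = -(1 / 2) * ((∫ x, fderiv ℝ (f a) x (X a x) * nψ x)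
          + ∫ x, (f a x) ^ 2 * nψ x) := by linarith
    rw [this]
    ring
  -- sum over a and rewrite both integrals
  have sum1 : ∑ a : Fin n, (∫ x, Complex.normSq (fderiv ℝ ψ x (X a x)))
      = ∫ x, ∑ b : Fin n,
          ‖fderiv ℝ ψ x (EuclideanSpace.single b 1)‖ ^ 2 := by
    rw [← integral_finset_sum _ fun a _ => int1 a]
    refine integral_congr_ae (Filter.Eventually.of_forall fun x => ?_)
    beta_reduce
    rw [aux_frame (fun a => X a x) (hXON x) (fderiv ℝ ψ x)]
    exact Finset.sum_congr rfl fun b _ => (Complex.sq_norm _).symm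
  have sum2 : ∑ a : Fin n, ((1 / 2) * (∫ x, fderiv ℝ (f a) x (X a x) * nψ x)
        + (1 / 4) * ∫ x, (f a x) ^ 2 * nψ x)
      = ∫ x, V x * ‖ψ x‖ ^ 2 := by
    have : ∀ a : Fin n, (1 / 2) * (∫ x, fderiv ℝ (f a) x (X a x) * nψ x)
        + (1 / 4) * (∫ x, (f a x) ^ 2 * nψ x)
        = ∫ x, ((1 / 2) * (fderiv ℝ (f a) x (X a x) * nψ x)
            + (1 / 4) * ((f a x) ^ 2 * nψ x)) := by
      intro a
      rw [integral_add ((int4 a).const_mul _) ((int3 a).const_mul _),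
        integral_const_mul, integral_const_mul]
    have intV : ∀ a : Fin n, Integrable (fun x =>
        (1 / 2) * (fderiv ℝ (f a) x (X a x) * nψ x)
          + (1 / 4) * ((f a x) ^ 2 * nψ x)) volume := fun a =>
      ((int4 a).const_mul _).add ((int3 a).const_mul _)
    simp_rw [this]
    rw [← integral_finset_sum _ fun a _ => intV a]
    refine integral_congr_ae (Filter.Eventually.of_forall fun x => ?_)
    beta_reduce
    rw [hV x, Complex.sq_norm]
    rw [Finset.sum_add_distrib]
    simp only [← Finset.sum_mul, ← Finset.mul_sum]
    ring
  calc ∑ a : Fin n, ∫ x, ‖Pψ a x‖ ^ 2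
      = ∑ a : Fin n, ℏ ^ 2 * ((∫ x, Complex.normSq (fderiv ℝ ψ x (X a x)))
          - ((1 / 2) * (∫ x, fderiv ℝ (f a) x (X a x) * nψ x)
            + (1 / 4) * ∫ x, (f a x) ^ 2 * nψ x)) :=
        Finset.sum_congr rfl fun a _ => stepC a
    _ = ℏ ^ 2 * (∑ a : Fin n, (∫ x, Complex.normSq (fderiv ℝ ψ x (X a x))))
        - ℏ ^ 2 * ∑ a : Fin n, ((1 / 2) * (∫ x, fderiv ℝ (f a) x (X a x) * nψ x)
            + (1 / 4) * ∫ x, (f a x) ^ 2 * nψ x) := by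
        simp only [mul_sub, Finset.sum_sub_distrib, Finset.mul_sum]
    _ = _ := by rw [sum1, sum2]
end

section
/- For a Lie group with left-invariant metric making a frame {X_a} orthonormal with structure constants [X_a,X_b] = Σ_c C_{ab}^c X_c, the divergence of each frame field is constant and equals f_a = −Σ_b C_{ab}^b; consequently the geometric potential reduces to the algebraic constant V = ¼Σ_a f_a² = ¼Σ_a (Σ_b C_{ab}^b)² ≥ 0, and V = 0 iff the Lie algebra is unimodular. -/
/-!
In the chart the frame fields are the columns of `M`, and the Riemannian density making them
orthonormal is `ω = |det M|⁻¹`, so by Jacobi's formula `d(log ω) = -tr(M⁻¹ dM)`. Along `X_a` the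
columns of `dM` are `D_{X_a} X_b = D_{X_b} X_a + [X_a, X_b]`, i.e. `dM(X_a) = J_a M + M K_a` with
`J_a` the Jacobian matrix of `X_a` and `(K_a)_{cb} = C_{ab}^c`. Hence
`tr(M⁻¹ dM(X_a)) = tr J_a + Σ_b C_{ab}^b`, and the Euclidean divergence `tr J_a` cancels.
-/

open Matrix

namespace Matrix

variable {ι : Type*} [Fintype ι] [DecidableEq ι]

def detRowContinuousMultilinear (𝕜 : Type*) [NontriviallyNormedField 𝕜] :
    ContinuousMultilinearMap 𝕜 (fun _ : ι => ι → 𝕜) 𝕜 :=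
  { (detRowAlternating : (ι → 𝕜) [⋀^ι]→ₗ[𝕜] 𝕜).toMultilinearMap with
    cont := continuous_id.matrix_det }

theorem detRowContinuousMultilinear_apply {𝕜 : Type*} [NontriviallyNormedField 𝕜]
    (m : ι → ι → 𝕜) : detRowContinuousMultilinear 𝕜 m = det (of m) :=
  rfl

variable {R : Type*} [CommRing R]

theorem det_updateRow_eq_sum_adjugate_mul (A : Matrix ι ι R) (i : ι) (w : ι → R) :
    (A.updateRow i w).det = ∑ j, A.adjugate j i * w j := by
  rw [← cramer_transpose_apply, cramer_eq_adjugate_mulVec, ← adjugate_transpose]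
  rfl

theorem trace_inv_mul_add_mul {P : Matrix ι ι R} (hP : IsUnit P.det) (A K : Matrix ι ι R) :
    trace (P⁻¹ * (A * P + P * K)) = trace A + trace K := by
  rw [mul_add, trace_add, ← Matrix.mul_assoc, trace_mul_comm, ← Matrix.mul_assoc,
    mul_nonsing_inv _ hP, ← Matrix.mul_assoc, nonsing_inv_mul _ hP, Matrix.one_mul, Matrix.one_mul]

end Matrix

section Jacobi

variable {ι : Type*} [Fintype ι] [DecidableEq ι]

theorem hasFDerivAt_det {𝕜 : Type*} [NontriviallyNormedField 𝕜] {E : Type*}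
    [NormedAddCommGroup E] [NormedSpace 𝕜 E] {M : E → Matrix ι ι 𝕜} {M' : ι → ι → E →L[𝕜] 𝕜}
    {x : E} (hM : ∀ i j, HasFDerivAt (fun y => M y i j) (M' i j) x) :
    HasFDerivAt (fun y => (M y).det) (∑ i, ∑ j, (M x).adjugate j i • M' i j) x := by
  have hrows i : HasFDerivAt (fun y => M y i) (ContinuousLinearMap.pi (M' i)) x :=
    hasFDerivAt_pi.2 (hM i)
  refine (HasFDerivAt.multilinear_comp (f := detRowContinuousMultilinear 𝕜) hrows).congr_fderiv ?_
  ext v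
  simp only [_root_.sum_apply, ContinuousLinearMap.comp_apply,
    ContinuousMultilinearMap.toContinuousLinearMap_apply, _root_.smul_apply, smul_eq_mul,
    detRowContinuousMultilinear_apply]
  exact Finset.sum_congr rfl fun i _ => det_updateRow_eq_sum_adjugate_mul (M x) i _

theorem fderiv_log_abs_det_apply {E : Type*} [NormedAddCommGroup E] [NormedSpace ℝ E]
    {M : E → Matrix ι ι ℝ} {M' : ι → ι → E →L[ℝ] ℝ} {x : E}
    (hM : ∀ i j, HasFDerivAt (fun y => M y i j) (M' i j) x) (hx : (M x).det ≠ 0) (v : E) :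
    fderiv ℝ (fun y => Real.log |(M y).det|) x v = trace ((M x)⁻¹ * of fun i j => M' i j v) := by
  simp only [Real.log_abs]
  rw [((hasFDerivAt_det hM).log hx).fderiv, inv_def, Ring.inverse_eq_inv', smul_mul, trace_smul]
  simp only [trace, diag, smul_eq_mul, mul_apply, of_apply, Finset.mul_sum, _root_.sum_apply,
    _root_.smul_apply]
  exact Finset.sum_comm

end Jacobi

section Frame

variable {ι : Type*} [Fintype ι] [DecidableEq ι]

local notation "E" => EuclideanSpace ℝ ι

noncomputable def jacobianMatrix (F : E → E) (x : E) : Matrix ι ι ℝ :=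
  of fun i k => fderiv ℝ F x (EuclideanSpace.single k 1) i

def frameMatrix (X : ι → E → E) (x : E) : Matrix ι ι ℝ :=
  of fun i b => X b x i

theorem fderiv_apply_eq_sum_jacobianMatrix (F : E → E) (x v : E) (i : ι) :
    fderiv ℝ F x v i = ∑ k, jacobianMatrix F x i k * v k := by
  conv_lhs => rw [← (EuclideanSpace.basisFun ι ℝ).sum_repr v]
  simp [jacobianMatrix, mul_comm]

theorem fderiv_frame_matrix_eq_of_bracket {X : ι → E → E} {C : ι → ι → ι → ℝ} {a : ι} {x : E}
    (hbracket : ∀ b, fderiv ℝ (X b) x (X a x) - fderiv ℝ (X a) x (X b x)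
      = ∑ c, C a b c • X c x) :
    (of fun i b => fderiv ℝ (X b) x (X a x) i)
      = jacobianMatrix (X a) x * frameMatrix X x + frameMatrix X x * of fun c b => C a b c := by
  ext i b
  have h := congrArg (· i) (hbracket b)
  simp only [PiLp.sub_apply, WithLp.ofLp_sum, Finset.sum_apply, PiLp.smul_apply, smul_eq_mul,
    sub_eq_iff_eq_add] at h
  rw [of_apply, h, fderiv_apply_eq_sum_jacobianMatrix, Matrix.add_apply, mul_apply, mul_apply]
  simp only [frameMatrix, of_apply, mul_comm, add_comm]

end Frame

/-- **Divergence of a left-invariant orthonormal frame**: for a frame `{X_a}`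
(modelled in a chart) that is pointwise a basis, closed under Lie bracket with
constant structure constants `[X_a,X_b] = Σ_c C_{ab}^c X_c`, the divergence of
each frame field with respect to the Riemannian volume density making the
frame orthonormal is the constant `f_a = −Σ_b C_{ab}^b`; consequently the
geometric potential is the algebraic constant `V = ¼ Σ_a f_a² ≥ 0`, and
`V = 0` iff the Lie algebra is unimodular (`Σ_b C_{ab}^b = 0` for all `a`). -/
theorem left_invariant_frame_divergence
    (n : ℕ)
    (X : Fin n → EuclideanSpace ℝ (Fin n) → EuclideanSpace ℝ (Fin n))
    (hXsm : ∀ a, ContDiff ℝ 1 (X a))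
    (C : Fin n → Fin n → Fin n → ℝ)
    (hbracket : ∀ a b x,
      fderiv ℝ (X b) x (X a x) - fderiv ℝ (X a) x (X b x)
        = ∑ c : Fin n, C a b c • X c x)
    (M : EuclideanSpace ℝ (Fin n) → Matrix (Fin n) (Fin n) ℝ)
    (hM : ∀ x i a, M x i a = X a x i)
    (hdet : ∀ x, (M x).det ≠ 0)
    (ω : EuclideanSpace ℝ (Fin n) → ℝ)
    (hω : ∀ x, ω x = |(M x).det|⁻¹)
    (divh : (EuclideanSpace ℝ (Fin n) → EuclideanSpace ℝ (Fin n)) →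
        EuclideanSpace ℝ (Fin n) → ℝ)
    (hdivh : ∀ F x, divh F x =
        (∑ b : Fin n, (fderiv ℝ F x (EuclideanSpace.single b 1)) b)
        + fderiv ℝ (fun y => Real.log (ω y)) x (F x))
    (V : ℝ)
    (hV : V = (1 / 4) * ∑ a : Fin n, (∑ b : Fin n, C a b b) ^ 2) :
    (∀ a x, divh (X a) x = -∑ b : Fin n, C a b b) ∧
    0 ≤ V ∧
    (V = 0 ↔ ∀ a : Fin n, (∑ b : Fin n, C a b b) = 0) := by
  refine ⟨fun a x => ?_, hV ▸ by positivity, ?_⟩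
  · have hframe : M x = frameMatrix X x := Matrix.ext (hM x)
    have hentry i j : HasFDerivAt (fun y => M y i j)
        ((EuclideanSpace.proj i).comp (fderiv ℝ (X j) x)) x := by
      simp only [hM]
      exact (EuclideanSpace.proj i).hasFDerivAt.comp x
        ((hXsm j).differentiable one_ne_zero x).hasFDerivAt
    have hlog : fderiv ℝ (fun y => Real.log (ω y)) x (X a x)
        = -(trace (jacobianMatrix (X a) x) + ∑ b, C a b b) := by
      simp only [hω, Real.log_inv, fderiv_fun_neg, _root_.neg_apply,
        fderiv_log_abs_det_apply hentry (hdet x), ContinuousLinearMap.comp_apply,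
        PiLp.proj_apply]
      rw [fderiv_frame_matrix_eq_of_bracket (hbracket a · x), hframe,
        trace_inv_mul_add_mul (hframe ▸ hdet x).isUnit]
      rfl
    rw [hdivh, hlog]
    change trace (jacobianMatrix (X a) x) + _ = _
    ring
  · rw [hV, mul_eq_zero, Fintype.sum_eq_zero_iff_of_nonneg fun a => sq_nonneg _]
    simp [funext_iff]
end
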